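/- arXiv:2501.17109 — 7 statements merged into one kernel-verified Lean document; each statement's English description precedes it below -/
import Mathlib

section
/- For an MPS tensor A, the following equality of subspaces of H^{⊗(k+1)} holds: (S_k(A) ⊗ S_1(A)) ∩ (S_1(A) ⊗ S_k(A)) = (S_k(A) ⊗ H) ∩ (H ⊗ S_k(A)), for k ≥ 2. -/
open scoped BigOperators

noncomputable section

def prodA {d D : ℕ} (A : Fin d → Matrix (Fin D) (Fin D) ℂ) {k : ℕ} (s : Fin k → Fin d) :
    Matrix (Fin D) (Fin D) ℂ :=
  (List.ofFn fun t => A (s t)).prod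

def mpsVec {d D : ℕ} (A : Fin d → Matrix (Fin D) (Fin D) ℂ) (X : Matrix (Fin D) (Fin D) ℂ)
    (k : ℕ) : (Fin k → Fin d) → ℂ :=
  fun s => (X * prodA A s).trace

def mpsSpace {d D : ℕ} (A : Fin d → Matrix (Fin D) (Fin D) ℂ) (k : ℕ) :
    Submodule ℂ ((Fin k → Fin d) → ℂ) :=
  Submodule.span ℂ (Set.range fun X => mpsVec A X k)

/-- S ⊗ T inside H^{⊗(k+1)}, where S lives on the first k sites and T on the last site. -/
def tensSnoc {d k : ℕ} (S : Submodule ℂ ((Fin k → Fin d) → ℂ))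
    (T : Submodule ℂ ((Fin 1 → Fin d) → ℂ)) :
    Submodule ℂ ((Fin (k + 1) → Fin d) → ℂ) :=
  Submodule.span ℂ
    {v | ∃ f ∈ S, ∃ g ∈ T,
      v = fun s => f (fun t => s (Fin.castSucc t)) * g (fun _ => s (Fin.last k))}

/-- T ⊗ S inside H^{⊗(k+1)}, where T lives on the first site and S on the last k sites. -/
def tensCons {d k : ℕ} (T : Submodule ℂ ((Fin 1 → Fin d) → ℂ))
    (S : Submodule ℂ ((Fin k → Fin d) → ℂ)) :
    Submodule ℂ ((Fin (k + 1) → Fin d) → ℂ) :=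
  Submodule.span ℂ
    {v | ∃ f ∈ S, ∃ g ∈ T,
      v = fun s => g (fun _ => s 0) * f (fun t => s t.succ)}

/-! A function `v` of `k + 1` sites lies in `S ⊗ T` exactly when each of its slices does: fixing
the last site must give a vector of `S`, fixing the first `k` sites a vector of `T`. For `v` in
`(S_k ⊗ H) ∩ (H ⊗ S_k)` only the second condition for `S_k ⊗ S_1` is in question. Fixing the
first `k` sites of `v` is the same as first fixing site `0`, which gives a vector of `S_k`, and
then fixing the sites `1, …, k - 1` of that vector. Since `k ≥ 1`, `S_k ⊆ S_{k-1} ⊗ S_1`, so the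
result lies in `S_1`. The factor `S_1 ⊗ S_k` is handled by the mirror-image argument. -/

section TensorSpan

variable {K α β γ : Type*} [Field K]

/-- `S ⊗ T` inside `γ → K`, where `γ` is identified with `α × β` by `e`. -/
def tensorSpan (e : γ ≃ α × β) (S : Submodule K (α → K)) (T : Submodule K (β → K)) :
    Submodule K (γ → K) :=
  Submodule.span K {w | ∃ f ∈ S, ∃ g ∈ T, w = fun c => f (e c).1 * g (e c).2}

theorem mem_tensorSpan_iff [Finite β] {e : γ ≃ α × β} {S : Submodule K (α → K)}
    {T : Submodule K (β → K)} {v : γ → K} :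
    v ∈ tensorSpan e S T ↔
      (∀ b, (fun a => v (e.symm (a, b))) ∈ S) ∧ ∀ a, (fun b => v (e.symm (a, b))) ∈ T := by
  constructor
  · intro hv
    have hle : tensorSpan e S T ≤
        (⨅ b, S.comap (LinearMap.funLeft K K fun a => e.symm (a, b))) ⊓
          ⨅ a, T.comap (LinearMap.funLeft K K fun b => e.symm (a, b)) := by
      refine Submodule.span_le.2 ?_
      rintro _ ⟨f, hf, g, hg, rfl⟩
      simp only [SetLike.mem_coe, Submodule.mem_inf, Submodule.mem_iInf, Submodule.mem_comap]
      refine ⟨fun b => ?_, fun a => ?_⟩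
      · show (fun a => f (e (e.symm (a, b))).1 * g (e (e.symm (a, b))).2) ∈ S
        simp only [Equiv.apply_symm_apply, mul_comm (f _)]
        exact S.smul_mem (g b) hf
      · show (fun b => f (e (e.symm (a, b))).1 * g (e (e.symm (a, b))).2) ∈ T
        simp only [Equiv.apply_symm_apply]
        exact T.smul_mem (f a) hg
    have hslices := hle hv
    simp only [Submodule.mem_inf, Submodule.mem_iInf, Submodule.mem_comap] at hslices
    exact hslices
  · rintro ⟨hS, hT⟩
    classical
    have := Fintype.ofFinite β
    -- A projection `π` onto `T` fixes every row of `v`; expanding the rows in the standard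
    -- basis before applying `π` writes `v` as a sum of products of slices with vectors `π δ_b ∈ T`.
    obtain ⟨p, hp⟩ := T.subtype.exists_leftInverse_of_injective T.ker_subtype
    set π := T.subtype ∘ₗ p
    have hπ : ∀ g ∈ T, π g = g := fun g hg =>
      congrArg Subtype.val (LinearMap.congr_fun hp ⟨g, hg⟩)
    have hdecomp : v = ∑ b, fun c =>
        v (e.symm ((e c).1, b)) * π (fun j => if b = j then 1 else 0) (e c).2 := by
      funext c
      have hrow := congrFun (hπ _ (hT (e c).1)) (e c).2
      rw [pi_eq_sum_univ (fun b => v (e.symm ((e c).1, b)))] at hrow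
      simpa [Finset.sum_apply] using hrow.symm
    rw [hdecomp]
    exact Submodule.sum_mem _ fun b _ => Submodule.subset_span ⟨_, hS b, _, (p _).2, rfl⟩

end TensorSpan

section Sites

def snocSplit (d k : ℕ) : (Fin (k + 1) → Fin d) ≃ (Fin k → Fin d) × (Fin 1 → Fin d) where
  toFun s := (Fin.init s, fun _ => s (Fin.last k))
  invFun p := Fin.snoc p.1 (p.2 0)
  left_inv s := Fin.snoc_init_self s
  right_inv p := by
    ext i
    · simp
    · simp [Subsingleton.elim i 0]

def consSplit (d k : ℕ) : (Fin (k + 1) → Fin d) ≃ (Fin 1 → Fin d) × (Fin k → Fin d) where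
  toFun s := (fun _ => s 0, Fin.tail s)
  invFun p := Fin.cons (p.1 0) p.2
  left_inv s := Fin.cons_self_tail s
  right_inv p := by
    ext i
    · simp [Subsingleton.elim i 0]
    · simp

variable {d k : ℕ}

theorem tensSnoc_eq_tensorSpan (S : Submodule ℂ ((Fin k → Fin d) → ℂ))
    (T : Submodule ℂ ((Fin 1 → Fin d) → ℂ)) :
    tensSnoc S T = tensorSpan (snocSplit d k) S T :=
  rfl

theorem tensCons_eq_tensorSpan (T : Submodule ℂ ((Fin 1 → Fin d) → ℂ))
    (S : Submodule ℂ ((Fin k → Fin d) → ℂ)) :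
    tensCons T S = tensorSpan (consSplit d k) T S := by
  refine congrArg (Submodule.span ℂ) (Set.ext fun v => ?_)
  exact ⟨fun ⟨f, hf, g, hg, h⟩ => ⟨g, hg, f, hf, h⟩, fun ⟨g, hg, f, hf, h⟩ => ⟨f, hf, g, hg, h⟩⟩

theorem mem_tensSnoc_iff {S : Submodule ℂ ((Fin k → Fin d) → ℂ)}
    {T : Submodule ℂ ((Fin 1 → Fin d) → ℂ)} {v : (Fin (k + 1) → Fin d) → ℂ} :
    v ∈ tensSnoc S T ↔
      (∀ i, (fun s => v (Fin.snoc s i)) ∈ S) ∧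
        ∀ s, (fun u : Fin 1 → Fin d => v (Fin.snoc s (u 0))) ∈ T := by
  rw [tensSnoc_eq_tensorSpan, mem_tensorSpan_iff]
  exact and_congr_left' ⟨fun h i => h fun _ => i, fun h u => h (u 0)⟩

theorem mem_tensCons_iff {T : Submodule ℂ ((Fin 1 → Fin d) → ℂ)}
    {S : Submodule ℂ ((Fin k → Fin d) → ℂ)} {v : (Fin (k + 1) → Fin d) → ℂ} :
    v ∈ tensCons T S ↔
      (∀ i, (fun s => v (Fin.cons i s)) ∈ S) ∧
        ∀ s, (fun u : Fin 1 → Fin d => v (Fin.cons (u 0) s)) ∈ T := by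
  rw [tensCons_eq_tensorSpan, mem_tensorSpan_iff, and_comm]
  exact and_congr_left' ⟨fun h i => h fun _ => i, fun h u => h (u 0)⟩

end Sites

section MPS

variable {d D : ℕ} (A : Fin d → Matrix (Fin D) (Fin D) ℂ)

theorem prodA_cons {m : ℕ} (s : Fin m → Fin d) (x : Fin d) :
    prodA A (Fin.cons x s) = A x * prodA A s := by
  simp [prodA, List.ofFn_succ]

theorem prodA_snoc {m : ℕ} (s : Fin m → Fin d) (x : Fin d) :
    prodA A (Fin.snoc s x) = prodA A s * A x := by
  rw [prodA, List.ofFn_succ', List.prod_concat]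
  simp [prodA]

theorem prodA_fin_one (u : Fin 1 → Fin d) : prodA A u = A (u 0) := by
  simp [prodA]

theorem mpsVec_mem_mpsSpace (X : Matrix (Fin D) (Fin D) ℂ) (k : ℕ) :
    mpsVec A X k ∈ mpsSpace A k :=
  Submodule.subset_span ⟨X, rfl⟩

theorem mpsSpace_succ_le_tensSnoc (m : ℕ) :
    mpsSpace A (m + 1) ≤ tensSnoc (mpsSpace A m) (mpsSpace A 1) := by
  refine Submodule.span_le.2 ?_
  rintro _ ⟨X, rfl⟩
  refine mem_tensSnoc_iff.2 ⟨fun i => ?_, fun s => ?_⟩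
  · convert mpsVec_mem_mpsSpace A (A i * X) m using 1
    funext s
    simp only [mpsVec, prodA_snoc, ← mul_assoc]
    rw [Matrix.trace_mul_comm, mul_assoc]
  · convert mpsVec_mem_mpsSpace A (X * prodA A s) 1 using 1
    funext u
    simp only [mpsVec, prodA_snoc, prodA_fin_one, mul_assoc]

theorem mpsSpace_succ_le_tensCons (m : ℕ) :
    mpsSpace A (m + 1) ≤ tensCons (mpsSpace A 1) (mpsSpace A m) := by
  refine Submodule.span_le.2 ?_
  rintro _ ⟨X, rfl⟩
  refine mem_tensCons_iff.2 ⟨fun i => ?_, fun s => ?_⟩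
  · convert mpsVec_mem_mpsSpace A (X * A i) m using 1
    funext s
    simp only [mpsVec, prodA_cons, mul_assoc]
  · convert mpsVec_mem_mpsSpace A (prodA A s * X) 1 using 1
    funext u
    simp only [mpsVec, prodA_cons, prodA_fin_one, ← mul_assoc]
    rw [Matrix.trace_mul_comm, ← mul_assoc]

end MPS

/-- (S_k ⊗ S_1) ∩ (S_1 ⊗ S_k) = (S_k ⊗ H) ∩ (H ⊗ S_k) for k ≥ 2. -/
theorem inter_tens_S1_eq_inter_tens_top {d D : ℕ} (A : Fin d → Matrix (Fin D) (Fin D) ℂ)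
    (k : ℕ) (hk : 2 ≤ k) :
    tensSnoc (mpsSpace A k) (mpsSpace A 1) ⊓ tensCons (mpsSpace A 1) (mpsSpace A k) =
      tensSnoc (mpsSpace A k) ⊤ ⊓ tensCons ⊤ (mpsSpace A k) := by
  obtain ⟨m, rfl⟩ : ∃ m, k = m + 1 := ⟨k - 1, by omega⟩
  apply le_antisymm
  · rintro v ⟨hSnoc, hCons⟩
    exact ⟨mem_tensSnoc_iff.2 ⟨(mem_tensSnoc_iff.1 hSnoc).1, fun _ => trivial⟩,
      mem_tensCons_iff.2 ⟨(mem_tensCons_iff.1 hCons).1, fun _ => trivial⟩⟩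
  rintro v ⟨hSnoc, hCons⟩
  have hsnocSlice := (mem_tensSnoc_iff.1 hSnoc).1
  have hconsSlice := (mem_tensCons_iff.1 hCons).1
  constructor
  · refine mem_tensSnoc_iff.2 ⟨hsnocSlice, fun s => ?_⟩
    rw [← Fin.cons_self_tail s]
    simp only [← Fin.cons_snoc_eq_snoc_cons]
    exact (mem_tensSnoc_iff.1 (mpsSpace_succ_le_tensSnoc A m (hconsSlice (s 0)))).2 (Fin.tail s)
  · refine mem_tensCons_iff.2 ⟨hconsSlice, fun s => ?_⟩
    rw [← Fin.snoc_init_self s]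
    simp only [Fin.cons_snoc_eq_snoc_cons]
    exact (mem_tensCons_iff.1 (mpsSpace_succ_le_tensCons A m (hsnocSlice (s (Fin.last m))))).2
      (Fin.init s)
end
end

section
/- A j-injective MPS tensor is left j-stable (and right j-stable). -/
open scoped BigOperators

noncomputable section

/-- The virtual MPS subspace V_j(A) ⊆ M_D. -/
def virtSpace {d D : ℕ} (A : Fin d → Matrix (Fin D) (Fin D) ℂ) (j : ℕ) :
    Submodule ℂ (Matrix (Fin D) (Fin D) ℂ) :=
  Submodule.span ℂ (Set.range fun s : Fin j → Fin d => prodA A s)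

/-- A is left j-stable. -/
def LeftStable {d D : ℕ} (A : Fin d → Matrix (Fin D) (Fin D) ℂ) (j : ℕ) : Prop :=
  ∃ Y : Fin d → Matrix (Fin D) (Fin D) ℂ,
    (∀ i, ∀ M ∈ virtSpace A (j + 1), Y i * M ∈ virtSpace A j) ∧
    ∀ M ∈ virtSpace A (j + 1), (∑ i, A i * Y i) * M = M

/-- A is right j-stable. -/
def RightStable {d D : ℕ} (A : Fin d → Matrix (Fin D) (Fin D) ℂ) (j : ℕ) : Prop :=
  ∃ Y : Fin d → Matrix (Fin D) (Fin D) ℂ,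
    (∀ i, ∀ M ∈ virtSpace A (j + 1), M * Y i ∈ virtSpace A j) ∧
    ∀ M ∈ virtSpace A (j + 1), M * (∑ i, Y i * A i) = M

/-!
Since `V_j(A) = M_D`, the first condition of stability is automatic, and it suffices to find
`Y` with `∑ i, A i * Y i = 1` (resp. `∑ i, Y i * A i = 1`). For `j ≥ 1` the identity lies in
`V_j(A)`, and splitting off the first (resp. last) factor of each word `A_{i_1} ⋯ A_{i_j}` writes
it in this form. For `j = 0`, `M_D = ℂ ∙ 1`, so `V_1(A)` is either `0`, where `Y = 0` works,
or contains `1`, which is then handled as before.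
-/

theorem Submodule.mem_of_span_singleton_eq_top {K V : Type*} [Field K] [AddCommGroup V]
    [Module K V] {x : V} (hx : K ∙ x = ⊤) {p : Submodule K V} (hp : p ≠ ⊥) : x ∈ p := by
  obtain ⟨v, hvp, hv⟩ := p.ne_bot_iff.mp hp
  obtain ⟨a, rfl⟩ := Submodule.mem_span_singleton.mp (hx ▸ Submodule.mem_top : v ∈ K ∙ x)
  have ha : a ≠ 0 := by rintro rfl; simp at hv
  simpa [smul_smul, inv_mul_cancel₀ ha] using p.smul_mem a⁻¹ hvp

section

variable {d D : ℕ} (A : Fin d → Matrix (Fin D) (Fin D) ℂ)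

lemma prodA_of_isEmpty (s : Fin 0 → Fin d) : prodA A s = 1 := rfl

lemma prodA_succ {k : ℕ} (s : Fin (k + 1) → Fin d) :
    prodA A s = A (s 0) * prodA A (Fin.tail s) := by
  simp [prodA, List.ofFn_succ, Fin.tail]

lemma prodA_succ' {k : ℕ} (s : Fin (k + 1) → Fin d) :
    prodA A s = prodA A (Fin.init s) * A (s (Fin.last k)) := by
  simp only [prodA, List.ofFn_succ', List.concat_eq_append, List.prod_append, List.prod_cons,
    List.prod_nil, mul_one, Fin.init]

lemma virtSpace_zero : virtSpace A 0 = ℂ ∙ 1 := by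
  simp [virtSpace, prodA_of_isEmpty]

variable {A}

lemma exists_sum_mul_eq_of_mem_virtSpace_succ {k : ℕ} {M : Matrix (Fin D) (Fin D) ℂ}
    (hM : M ∈ virtSpace A (k + 1)) :
    ∃ Y : Fin d → Matrix (Fin D) (Fin D) ℂ, ∑ i, A i * Y i = M := by
  induction hM using Submodule.span_induction with
  | mem _ h =>
    obtain ⟨s, rfl⟩ := h
    refine ⟨Pi.single (s 0) (prodA A (Fin.tail s)), ?_⟩
    rw [Fintype.sum_eq_single (s 0) fun i hi => by simp [hi], Pi.single_eq_same]
    exact (prodA_succ A s).symm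
  | zero => exact ⟨0, by simp⟩
  | add _ _ _ _ h₁ h₂ =>
    obtain ⟨Y₁, rfl⟩ := h₁
    obtain ⟨Y₂, rfl⟩ := h₂
    exact ⟨Y₁ + Y₂, by simp [mul_add, Finset.sum_add_distrib]⟩
  | smul c _ _ h =>
    obtain ⟨Y, rfl⟩ := h
    exact ⟨c • Y, by simp [Finset.smul_sum]⟩

lemma exists_sum_mul_eq_of_mem_virtSpace_succ' {k : ℕ} {M : Matrix (Fin D) (Fin D) ℂ}
    (hM : M ∈ virtSpace A (k + 1)) :
    ∃ Y : Fin d → Matrix (Fin D) (Fin D) ℂ, ∑ i, Y i * A i = M := by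
  induction hM using Submodule.span_induction with
  | mem _ h =>
    obtain ⟨s, rfl⟩ := h
    refine ⟨Pi.single (s (Fin.last k)) (prodA A (Fin.init s)), ?_⟩
    rw [Fintype.sum_eq_single (s (Fin.last k)) fun i hi => by simp [hi], Pi.single_eq_same]
    exact (prodA_succ' A s).symm
  | zero => exact ⟨0, by simp⟩
  | add _ _ _ _ h₁ h₂ =>
    obtain ⟨Y₁, rfl⟩ := h₁
    obtain ⟨Y₂, rfl⟩ := h₂
    exact ⟨Y₁ + Y₂, by simp [add_mul, Finset.sum_add_distrib]⟩
  | smul c _ _ h =>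
    obtain ⟨Y, rfl⟩ := h
    exact ⟨c • Y, by simp [Finset.smul_sum]⟩

lemma virtSpace_succ_eq_bot_or_one_mem {j : ℕ} (hj : virtSpace A j = ⊤) :
    virtSpace A (j + 1) = ⊥ ∨
      ∃ k, (1 : Matrix (Fin D) (Fin D) ℂ) ∈ virtSpace A (k + 1) := by
  cases j with
  | zero =>
    refine or_iff_not_imp_left.mpr fun h => ⟨0, ?_⟩
    exact Submodule.mem_of_span_singleton_eq_top ((virtSpace_zero A).symm.trans hj) h
  | succ k => exact Or.inr ⟨k, hj ▸ Submodule.mem_top⟩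

lemma leftStable_of_virtSpace_succ_eq_bot {j : ℕ} (h : virtSpace A (j + 1) = ⊥) :
    LeftStable A j := by
  refine ⟨0, fun _ M hM => ?_, fun M hM => ?_⟩ <;>
    rw [h, Submodule.mem_bot] at hM <;> simp [hM]

lemma rightStable_of_virtSpace_succ_eq_bot {j : ℕ} (h : virtSpace A (j + 1) = ⊥) :
    RightStable A j := by
  refine ⟨0, fun _ M hM => ?_, fun M hM => ?_⟩ <;>
    rw [h, Submodule.mem_bot] at hM <;> simp [hM]

lemma leftStable_of_sum_mul_eq_one {j : ℕ} (hj : virtSpace A j = ⊤)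
    {Y : Fin d → Matrix (Fin D) (Fin D) ℂ} (hY : ∑ i, A i * Y i = 1) : LeftStable A j :=
  ⟨Y, fun _ _ _ => hj ▸ Submodule.mem_top, fun M _ => by rw [hY, one_mul]⟩

lemma rightStable_of_sum_mul_eq_one {j : ℕ} (hj : virtSpace A j = ⊤)
    {Y : Fin d → Matrix (Fin D) (Fin D) ℂ} (hY : ∑ i, Y i * A i = 1) : RightStable A j :=
  ⟨Y, fun _ _ _ => hj ▸ Submodule.mem_top, fun M _ => by rw [hY, mul_one]⟩

end

/-- a j-injective MPS tensor is left j-stable (and right j-stable). -/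
theorem injective_implies_stable {d D : ℕ} (A : Fin d → Matrix (Fin D) (Fin D) ℂ) (j : ℕ)
    (hj : virtSpace A j = ⊤) : LeftStable A j ∧ RightStable A j := by
  rcases virtSpace_succ_eq_bot_or_one_mem hj with h | ⟨k, h⟩
  · exact ⟨leftStable_of_virtSpace_succ_eq_bot h, rightStable_of_virtSpace_succ_eq_bot h⟩
  · obtain ⟨Y, hY⟩ := exists_sum_mul_eq_of_mem_virtSpace_succ h
    obtain ⟨Y', hY'⟩ := exists_sum_mul_eq_of_mem_virtSpace_succ' h
    exact ⟨leftStable_of_sum_mul_eq_one hj hY, rightStable_of_sum_mul_eq_one hj hY'⟩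
end
end

section
/- If an MPS tensor A is left j-stable, then it is left k-stable for all k ≥ j (and analogously for right stability). -/
open scoped BigOperators

noncomputable section

/-!
Concatenating words gives `V_{a+b} = V_a * V_b` as a product of submodules of `M_D`. Hence
`V_{j+m+1} = V_{j+1} * V_m`, and both conditions of left `j`-stability, which concern left
multiplication by `Y i` and by `Z` on `V_{j+1}`, survive right multiplication by `V_m`: the same
`Y` witnesses left `(j+m)`-stability. Right stability is the mirror image, with `V_m` on the left.
-/

namespace Submodule

variable {R A : Type*} [CommSemiring R] [Semiring A] [Algebra R A] {P Q : Submodule R A}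

theorem mapsTo_mul_left_mul {y : A} (h : Set.MapsTo (y * ·) P Q) (N : Submodule R A) :
    Set.MapsTo (y * ·) (P * N) (Q * N) := by
  suffices P * N ≤ (Q * N).comap (LinearMap.mulLeft R y) from fun _ hM => this hM
  refine mul_le.mpr fun m hm n hn => ?_
  simpa only [mem_comap, LinearMap.mulLeft_apply, mul_assoc] using mul_mem_mul (h hm) hn

theorem mapsTo_mul_right_mul {y : A} (h : Set.MapsTo (· * y) P Q) (N : Submodule R A) :
    Set.MapsTo (· * y) (N * P) (N * Q) := by
  suffices N * P ≤ (N * Q).comap (LinearMap.mulRight R y) from fun _ hM => this hM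
  refine mul_le.mpr fun n hn m hm => ?_
  simpa only [mem_comap, LinearMap.mulRight_apply, mul_assoc] using mul_mem_mul hn (h hm)

theorem eqOn_mul_left_mul {z : A} (h : Set.EqOn (z * ·) id P) (N : Submodule R A) :
    Set.EqOn (z * ·) id (P * N) := by
  suffices P * N ≤ LinearMap.eqLocus (LinearMap.mulLeft R z) LinearMap.id from
    fun _ hM => this hM
  refine mul_le.mpr fun m hm n _ => ?_
  simp only [LinearMap.mem_eqLocus, LinearMap.mulLeft_apply, LinearMap.id_apply, ← mul_assoc]
  exact congrArg (· * n) (h hm)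

theorem eqOn_mul_right_mul {z : A} (h : Set.EqOn (· * z) id P) (N : Submodule R A) :
    Set.EqOn (· * z) id (N * P) := by
  suffices N * P ≤ LinearMap.eqLocus (LinearMap.mulRight R z) LinearMap.id from
    fun _ hM => this hM
  refine mul_le.mpr fun n _ m hm => ?_
  simp only [LinearMap.mem_eqLocus, LinearMap.mulRight_apply, LinearMap.id_apply, mul_assoc]
  exact congrArg (n * ·) (h hm)

end Submodule

section

variable {d D : ℕ} (A : Fin d → Matrix (Fin D) (Fin D) ℂ)

theorem prodA_append {a b : ℕ} (s : Fin a → Fin d) (t : Fin b → Fin d) :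
    prodA A (Fin.append s t) = prodA A s * prodA A t := by
  simp [prodA, List.ofFn_add, Fin.append_right]

theorem virtSpace_add (a b : ℕ) : virtSpace A (a + b) = virtSpace A a * virtSpace A b := by
  rw [virtSpace, virtSpace, virtSpace, Submodule.span_mul_span]
  congr 1
  ext M
  constructor
  · rintro ⟨s, rfl⟩
    refine ⟨_, ⟨fun i => s (Fin.castAdd b i), rfl⟩, _, ⟨fun i => s (Fin.natAdd a i), rfl⟩, ?_⟩
    simp only [← prodA_append, Fin.append_castAdd_natAdd]
  · rintro ⟨_, ⟨s, rfl⟩, _, ⟨t, rfl⟩, rfl⟩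
    exact ⟨Fin.append s t, prodA_append A s t⟩

variable {A}

theorem LeftStable.add {j : ℕ} (h : LeftStable A j) (m : ℕ) : LeftStable A (j + m) := by
  obtain ⟨Y, hY, hZ⟩ := h
  have hV : virtSpace A (j + m + 1) = virtSpace A (j + 1) * virtSpace A m := by
    rw [add_right_comm, virtSpace_add]
  refine ⟨Y, fun i => ?_, ?_⟩
  · rw [hV, virtSpace_add A j m]
    exact Submodule.mapsTo_mul_left_mul (hY i) _
  · rw [hV]
    exact Submodule.eqOn_mul_left_mul hZ _

theorem RightStable.add {j : ℕ} (h : RightStable A j) (m : ℕ) : RightStable A (m + j) := by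
  obtain ⟨Y, hY, hZ⟩ := h
  refine ⟨Y, fun i => ?_, ?_⟩
  · rw [add_assoc, virtSpace_add A m (j + 1), virtSpace_add A m j]
    exact Submodule.mapsTo_mul_right_mul (hY i) _
  · rw [add_assoc, virtSpace_add A m (j + 1)]
    exact Submodule.eqOn_mul_right_mul hZ _

end

/-- left (right) j-stability implies left (right) k-stability for all k ≥ j. -/
theorem stable_mono {d D : ℕ} (A : Fin d → Matrix (Fin D) (Fin D) ℂ) (j : ℕ) :
    (LeftStable A j → ∀ k, j ≤ k → LeftStable A k) ∧
    (RightStable A j → ∀ k, j ≤ k → RightStable A k) := by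
  refine ⟨fun h k hjk => ?_, fun h k hjk => ?_⟩
  · obtain ⟨m, rfl⟩ := Nat.exists_eq_add_of_le hjk
    exact h.add m
  · obtain ⟨m, rfl⟩ := Nat.exists_eq_add_of_le' hjk
    exact h.add m
end
end

section
/- If an MPS tensor A is left j-stable with matrices Y_i, then the operator O on H^{⊗(j+1)} with matrix coefficients defined by Y_i A_{i_0}⋯A_{i_j} = Σ O(i)^{i_1'…i_j'}_{i_0…i_j} A_{i_1'}⋯A_{i_j'} satisfies: for every M ∈ M_D, O applied to the tensor A M [A]^j equals N [A]^{j+1} with N = Σ_i A_i M Y_i; in particular O fixes every state |X[A]^{j+1}⟩ ∈ S_{j+1}(A). -/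
/-!
Multiplying `Y i * A_s = ∑_t c i s t • A_t` on the left by `A i * M` and summing over `i` gives the
first identity. For `M = 1` its right side is `(∑ i, A i * Y i) * A_s = A_s` by stability, since
`A_s ∈ V_{j+1}`; pairing with `X` through the trace then shows that `O` fixes `|X[A]^{j+1}⟩`.
-/

open scoped BigOperators

noncomputable section

lemma prodA_cons_s8 {d D j : ℕ} (A : Fin d → Matrix (Fin D) (Fin D) ℂ) (i : Fin d)
    (t : Fin j → Fin d) : prodA A (Fin.cons i t : Fin (j + 1) → Fin d) = A i * prodA A t := by
  simp [prodA, List.ofFn_succ]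

lemma prodA_mem_virtSpace {d D k : ℕ} (A : Fin d → Matrix (Fin D) (Fin D) ℂ)
    (s : Fin k → Fin d) : prodA A s ∈ virtSpace A k :=
  Submodule.subset_span ⟨s, rfl⟩

lemma sum_sum_smul_mul_eq_sum_mul_mul {𝕜 R ι κ : Type*} [CommSemiring 𝕜] [Semiring R]
    [Algebra 𝕜 R] [Fintype ι] [Fintype κ] (L Y : ι → R) (P : R) (Q : κ → R) (c : ι → κ → 𝕜)
    (h : ∀ i, Y i * P = ∑ t, c i t • Q t) :
    ∑ i, ∑ t, c i t • (L i * Q t) = (∑ i, L i * Y i) * P := by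
  simp_rw [Finset.sum_mul, mul_assoc, h, Finset.mul_sum, mul_smul_comm]

theorem stable_pushing_operator_general {d D j : ℕ} (A : Fin d → Matrix (Fin D) (Fin D) ℂ)
    (Y : Fin d → Matrix (Fin D) (Fin D) ℂ)
    (hY2 : ∀ M ∈ virtSpace A (j + 1), (∑ i, A i * Y i) * M = M)
    (c : Fin d → (Fin (j + 1) → Fin d) → (Fin j → Fin d) → ℂ)
    (hc : ∀ i (s : Fin (j + 1) → Fin d),
      Y i * prodA A s = ∑ t : Fin j → Fin d, c i s t • prodA A t) :
    (∀ M : Matrix (Fin D) (Fin D) ℂ, ∀ s : Fin (j + 1) → Fin d,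
      (∑ i : Fin d, ∑ t : Fin j → Fin d, c i s t • (A i * M * prodA A t)) =
        (∑ i : Fin d, A i * M * Y i) * prodA A s) ∧
    (∀ X : Matrix (Fin D) (Fin D) ℂ, ∀ s : Fin (j + 1) → Fin d,
      (∑ i : Fin d, ∑ t : Fin j → Fin d, c i s t * mpsVec A X (j + 1) (Fin.cons i t)) =
        mpsVec A X (j + 1) s) := by
  have push : ∀ M s, (∑ i, ∑ t, c i s t • (A i * M * prodA A t)) =
      (∑ i, A i * M * Y i) * prodA A s := fun M s =>
    sum_sum_smul_mul_eq_sum_mul_mul (fun i => A i * M) Y _ _ _ (fun i => hc i s)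
  refine ⟨push, fun X s => ?_⟩
  have fixed : (∑ i, ∑ t, c i s t • (A i * prodA A t)) = prodA A s := by
    simpa [hY2 _ (prodA_mem_virtSpace A s)] using push 1 s
  calc (∑ i, ∑ t, c i s t * mpsVec A X (j + 1) (Fin.cons i t))
      = (X * ∑ i, ∑ t, c i s t • (A i * prodA A t)).trace := by
        simp [mpsVec, prodA_cons_s8, Finset.mul_sum, Matrix.trace_sum]
    _ = mpsVec A X (j + 1) s := by rw [fixed]; rfl

/-- given a left j-stable tensor with stability matrices `Y` and coefficients `c`
witnessing `Y i * A_{s₀}⋯A_{s_j} = ∑_t c i s t • A_{t₁}⋯A_{t_j}`, the operator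
`O : v ↦ fun s => ∑ i t, c i s t * v (Fin.cons i t)` pushes boundary matrices to the left:
`O` applied to the matrix-valued tensor `A M [A]^j` gives `N [A]^{j+1}` with
`N = ∑ i, A i * M * Y i`, and in particular `O` fixes every MPS state `|X[A]^{j+1}⟩`. -/
theorem stable_pushing_operator {d D j : ℕ} (A : Fin d → Matrix (Fin D) (Fin D) ℂ)
    (Y : Fin d → Matrix (Fin D) (Fin D) ℂ)
    (hY1 : ∀ i, ∀ M ∈ virtSpace A (j + 1), Y i * M ∈ virtSpace A j)
    (hY2 : ∀ M ∈ virtSpace A (j + 1), (∑ i, A i * Y i) * M = M)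
    (c : Fin d → (Fin (j + 1) → Fin d) → (Fin j → Fin d) → ℂ)
    (hc : ∀ i (s : Fin (j + 1) → Fin d),
      Y i * prodA A s = ∑ t : Fin j → Fin d, c i s t • prodA A t) :
    (∀ M : Matrix (Fin D) (Fin D) ℂ, ∀ s : Fin (j + 1) → Fin d,
      (∑ i : Fin d, ∑ t : Fin j → Fin d, c i s t • (A i * M * prodA A t)) =
        (∑ i : Fin d, A i * M * Y i) * prodA A s) ∧
    (∀ X : Matrix (Fin D) (Fin D) ℂ, ∀ s : Fin (j + 1) → Fin d,
      (∑ i : Fin d, ∑ t : Fin j → Fin d, c i s t * mpsVec A X (j + 1) (Fin.cons i t)) =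
        mpsVec A X (j + 1) s) :=
  stable_pushing_operator_general A Y hY2 c hc
end
end

section
/- For the W-state MPS tensor and k ≥ 2, the intersection property holds: (S_k ⊗ ℂ²) ∩ (ℂ² ⊗ S_k) = S_{k+1}, where S_k = Span{ |0⟩^{⊗k}, |W_k⟩ }. -/
/-!
A vector `v` lies in `S ⊗ ℂ²` iff each slice `f ↦ v (f, x)` lies in `S`, and symmetrically for
`ℂ² ⊗ S`. So `v` in the intersection can be written both as
`v (f, x) = a x ⟨0…0|f⟩ + b x W_k(f)` and as `v (x, f) = c x ⟨0…0|f⟩ + d x W_k(f)`.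
Evaluating on `0…01`, `010…0` and `010…01` gives `a 1 = d 0 = b 0` and `b 1 = 0`, i.e.
`v = a 0 |0…0⟩ + b 0 |W_{k+1}⟩`; for the last string `k ≥ 2` is what makes its tail `10…01`
carry two ones, so that both `⟨0…0|` and `W_k` vanish on it. The reverse inclusion is the
identity `W_{k+1} = W_k ⊗ |0⟩ + |0…0⟩ ⊗ |1⟩ = |1⟩ ⊗ |0…0⟩ + |0⟩ ⊗ W_k`.
-/

open scoped BigOperators

noncomputable section

/-- The computational basis state |s⟩, as a coefficient vector. -/
def basisState {d k : ℕ} (s : Fin k → Fin d) : (Fin k → Fin d) → ℂ :=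
  fun t => if t = s then 1 else 0

/-- The W state on k sites. -/
def Wstate (k : ℕ) : (Fin k → Fin 2) → ℂ :=
  ∑ j : Fin k, basisState (fun t => if t = j then 1 else 0)

/-- S_k = Span{|0…0⟩, |W_k⟩} for the W-state tensor. -/
def wSpace (k : ℕ) : Submodule ℂ ((Fin k → Fin 2) → ℂ) :=
  Submodule.span ℂ {basisState (fun _ : Fin k => 0), Wstate k}

section Slices

variable {d k : ℕ}

theorem mem_tensSnoc_top_iff {S : Submodule ℂ ((Fin k → Fin d) → ℂ)}
    {v : (Fin (k + 1) → Fin d) → ℂ} :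
    v ∈ tensSnoc S ⊤ ↔ ∀ x, (fun f => v (Fin.snoc f x)) ∈ S := by
  constructor
  · intro hv x
    induction hv using Submodule.span_induction with
    | mem w hw =>
      obtain ⟨f, hf, g, -, rfl⟩ := hw
      convert S.smul_mem (g fun _ => x) hf using 1
      funext f'
      simp [mul_comm]
    | zero => exact S.zero_mem
    | add _ _ _ _ h₁ h₂ => exact S.add_mem h₁ h₂
    | smul c _ _ h => exact S.smul_mem c h
  · intro hv
    have hsum : v = ∑ x, fun s => v (Fin.snoc (fun t => s (Fin.castSucc t)) x) *
        if s (Fin.last k) = x then (1 : ℂ) else 0 := by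
      funext s
      simp [Finset.sum_apply, ← Fin.init_def]
    rw [hsum]
    exact Submodule.sum_mem _ fun x _ =>
      Submodule.subset_span ⟨_, hv x, fun u => if u 0 = x then 1 else 0, trivial, rfl⟩

theorem mem_tensCons_top_iff {S : Submodule ℂ ((Fin k → Fin d) → ℂ)}
    {v : (Fin (k + 1) → Fin d) → ℂ} :
    v ∈ tensCons ⊤ S ↔ ∀ x, (fun f => v (Fin.cons x f)) ∈ S := by
  constructor
  · intro hv x
    induction hv using Submodule.span_induction with
    | mem w hw =>
      obtain ⟨f, hf, g, -, rfl⟩ := hw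
      convert S.smul_mem (g fun _ => x) hf using 1
      funext f'
      simp
    | zero => exact S.zero_mem
    | add _ _ _ _ h₁ h₂ => exact S.add_mem h₁ h₂
    | smul c _ _ h => exact S.smul_mem c h
  · intro hv
    have hsum : v = ∑ x, fun s => (if s 0 = x then (1 : ℂ) else 0) *
        v (Fin.cons x fun t => s t.succ) := by
      funext s
      simp [Finset.sum_apply, ← Fin.tail_def]
    rw [hsum]
    exact Submodule.sum_mem _ fun x _ =>
      Submodule.subset_span ⟨_, hv x, fun u => if u 0 = x then 1 else 0, trivial, rfl⟩

theorem basisState_self (s : Fin k → Fin d) : basisState s s = 1 :=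
  if_pos rfl

theorem basisState_of_ne {s t : Fin k → Fin d} (h : t ≠ s) : basisState s t = 0 :=
  if_neg h

theorem basisState_snoc (s : Fin (k + 1) → Fin d) (f : Fin k → Fin d) (x : Fin d) :
    basisState s (Fin.snoc f x) = if x = s (Fin.last k) then basisState (Fin.init s) f else 0 := by
  induction s using Fin.snocCases with
  | snoc g y => by_cases hx : x = y <;> simp [basisState, hx]

theorem basisState_cons (s : Fin (k + 1) → Fin d) (x : Fin d) (f : Fin k → Fin d) :
    basisState s (Fin.cons x f) = if x = s 0 then basisState (Fin.tail s) f else 0 := by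
  induction s using Fin.consCases with
  | cons y g => by_cases hx : x = y <;> simp [basisState, hx]

theorem exists_coeffs_of_mem_tensSnoc_span_pair {u w : (Fin k → Fin d) → ℂ}
    {v : (Fin (k + 1) → Fin d) → ℂ} (hv : v ∈ tensSnoc (Submodule.span ℂ {u, w}) ⊤) :
    ∃ a b : Fin d → ℂ, ∀ s, v s =
      a (s (Fin.last k)) * u (Fin.init s) + b (s (Fin.last k)) * w (Fin.init s) := by
  choose a b hab using fun x => Submodule.mem_span_pair.mp (mem_tensSnoc_top_iff.mp hv x)
  refine ⟨a, b, fun s => ?_⟩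
  conv_lhs => rw [← Fin.snoc_init_self s]
  exact (congrFun (hab _) _).symm

theorem exists_coeffs_of_mem_tensCons_span_pair {u w : (Fin k → Fin d) → ℂ}
    {v : (Fin (k + 1) → Fin d) → ℂ} (hv : v ∈ tensCons ⊤ (Submodule.span ℂ {u, w})) :
    ∃ a b : Fin d → ℂ, ∀ s, v s = a (s 0) * u (Fin.tail s) + b (s 0) * w (Fin.tail s) := by
  choose a b hab using fun x => Submodule.mem_span_pair.mp (mem_tensCons_top_iff.mp hv x)
  refine ⟨a, b, fun s => ?_⟩
  conv_lhs => rw [← Fin.cons_self_tail s]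
  exact (congrFun (hab _) _).symm

end Slices

namespace Fin

variable {n : ℕ} {M : Type*} [Zero M]

theorem init_single_castSucc (i : Fin n) (x : M) :
    init (Pi.single i.castSucc x : Fin (n + 1) → M) = Pi.single i x := by
  funext t
  simp [init, Pi.single_apply]

theorem init_single_last (x : M) :
    init (Pi.single (last n) x : Fin (n + 1) → M) = fun _ => 0 := by
  funext t
  simp [init, castSucc_ne_last]

theorem tail_single_succ (i : Fin n) (x : M) :
    tail (Pi.single i.succ x : Fin (n + 1) → M) = Pi.single i x := by
  funext t
  simp [tail, Pi.single_apply]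

theorem tail_single_zero (x : M) :
    tail (Pi.single 0 x : Fin (n + 1) → M) = fun _ => 0 := by
  funext t
  simp [tail, succ_ne_zero]

end Fin

section WState

variable {k : ℕ}

theorem Wstate_eq_sum_single (k : ℕ) : Wstate k = ∑ j, basisState (Pi.single j 1) := by
  unfold Wstate
  congr! with j _ t
  rw [Pi.single_apply]

theorem Wstate_apply (f : Fin k → Fin 2) :
    Wstate k f = ∑ j, if f = Pi.single j 1 then 1 else 0 := by
  simp [Wstate_eq_sum_single, basisState]

theorem Wstate_snoc_zero (f : Fin k → Fin 2) : Wstate (k + 1) (Fin.snoc f 0) = Wstate k f := by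
  simp [Wstate_eq_sum_single, Fin.sum_univ_castSucc, basisState_snoc, Fin.init_single_castSucc]

theorem Wstate_snoc_one (f : Fin k → Fin 2) :
    Wstate (k + 1) (Fin.snoc f 1) = basisState (fun _ => 0) f := by
  simp [Wstate_eq_sum_single, Fin.sum_univ_castSucc, basisState_snoc, Fin.init_single_last]

theorem Wstate_cons_zero (f : Fin k → Fin 2) : Wstate (k + 1) (Fin.cons 0 f) = Wstate k f := by
  simp [Wstate_eq_sum_single, Fin.sum_univ_succ, basisState_cons, Fin.tail_single_succ]

theorem Wstate_cons_one (f : Fin k → Fin 2) :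
    Wstate (k + 1) (Fin.cons 1 f) = basisState (fun _ => 0) f := by
  simp [Wstate_eq_sum_single, Fin.sum_univ_succ, basisState_cons, Fin.tail_single_zero]

theorem Wstate_const_zero : Wstate k (fun _ => 0) = 0 := by
  refine (Wstate_apply _).trans (Finset.sum_eq_zero fun j _ => if_neg fun h => ?_)
  simpa using congrFun h j

theorem Wstate_single (j : Fin k) : Wstate k (Pi.single j 1) = 1 := by
  rw [Wstate_apply, Finset.sum_eq_single j (fun l _ hlj => if_neg fun h => ?_) (by simp),
    if_pos rfl]
  simpa [hlj.symm] using congrFun h j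

theorem Wstate_update_single {i j : Fin k} (hij : i ≠ j) :
    Wstate k (Function.update (Pi.single i 1) j 1) = 0 := by
  refine (Wstate_apply _).trans (Finset.sum_eq_zero fun l _ => if_neg fun h => ?_)
  by_cases hil : i = l
  · subst hil
    simpa [hij.symm] using congrFun h j
  · simpa [hij, Ne.symm hil] using congrFun h i

end WState

theorem basisState_zero_mem_wSpace (k : ℕ) : basisState (fun _ : Fin k => 0) ∈ wSpace k :=
  Submodule.subset_span (Set.mem_insert _ _)

theorem Wstate_mem_wSpace (k : ℕ) : Wstate k ∈ wSpace k :=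
  Submodule.subset_span (Set.mem_insert_of_mem _ rfl)

theorem wSpace_succ_le_tensSnoc (k : ℕ) : wSpace (k + 1) ≤ tensSnoc (wSpace k) ⊤ := by
  rw [wSpace, Submodule.span_le, Set.insert_subset_iff, Set.singleton_subset_iff]
  constructor <;> refine mem_tensSnoc_top_iff.mpr (Fin.forall_fin_two.mpr ⟨?_, ?_⟩)
  · simpa [basisState_snoc, Fin.init_def] using basisState_zero_mem_wSpace k
  · simp [basisState_snoc, ← Pi.zero_def]
  · simpa only [Wstate_snoc_zero] using Wstate_mem_wSpace k
  · simpa only [Wstate_snoc_one] using basisState_zero_mem_wSpace k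

theorem wSpace_succ_le_tensCons (k : ℕ) : wSpace (k + 1) ≤ tensCons ⊤ (wSpace k) := by
  rw [wSpace, Submodule.span_le, Set.insert_subset_iff, Set.singleton_subset_iff]
  constructor <;> refine mem_tensCons_top_iff.mpr (Fin.forall_fin_two.mpr ⟨?_, ?_⟩)
  · simpa [basisState_cons, Fin.tail_def] using basisState_zero_mem_wSpace k
  · simp [basisState_cons, ← Pi.zero_def]
  · simpa only [Wstate_cons_zero] using Wstate_mem_wSpace k
  · simpa only [Wstate_cons_one] using basisState_zero_mem_wSpace k

theorem mem_wSpace_succ_of_coeffs {k : ℕ} {v : (Fin (k + 1) → Fin 2) → ℂ} {a b : Fin 2 → ℂ}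
    (hv : ∀ s, v s = a (s (Fin.last k)) * basisState (fun _ => 0) (Fin.init s) +
      b (s (Fin.last k)) * Wstate k (Fin.init s))
    (ha : a 1 = b 0) (hb : b 1 = 0) : v ∈ wSpace (k + 1) := by
  refine Submodule.mem_span_pair.mpr ⟨a 0, b 0, funext fun s => ?_⟩
  induction s using Fin.snocCases with
  | snoc f x =>
    rw [hv]
    fin_cases x
    · simp [basisState_snoc, Fin.init_def, Wstate_snoc_zero]
    · simp [basisState_snoc, Wstate_snoc_one, ha, hb]

theorem tensSnoc_inf_tensCons_le_wSpace {k : ℕ} (hk : 2 ≤ k) :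
    tensSnoc (wSpace k) ⊤ ⊓ tensCons ⊤ (wSpace k) ≤ wSpace (k + 1) := by
  obtain ⟨m, rfl⟩ : ∃ m, k = m + 2 := ⟨k - 2, by omega⟩
  rintro v ⟨hsnoc, hcons⟩
  obtain ⟨a, b, hab⟩ := exists_coeffs_of_mem_tensSnoc_span_pair hsnoc
  obtain ⟨c, d, hcd⟩ := exists_coeffs_of_mem_tensCons_span_pair hcons
  have single_ne_zero (j : Fin (m + 2)) : (Pi.single j 1 : Fin (m + 2) → Fin 2) ≠ fun _ => 0 :=
    fun h => by simpa using congrFun h j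
  have hcastSucc (j : Fin (m + 2)) : v (Pi.single j.castSucc 1) = b 0 := by
    rw [hab, Fin.init_single_castSucc, Wstate_single, basisState_of_ne (single_ne_zero j)]
    simp
  have hsucc (j : Fin (m + 2)) : v (Pi.single j.succ 1) = d 0 := by
    rw [hcd, Fin.tail_single_succ, Wstate_single, basisState_of_ne (single_ne_zero j)]
    simp
  have hd : a 1 = d 0 := by
    rw [← hsucc (Fin.last _), Fin.succ_last, hab, Fin.init_single_last, basisState_self]
    simp [Wstate_const_zero]
  have hb0 : b 0 = d 0 := by
    rw [← hcastSucc 1, Fin.castSucc_one, ← hsucc 0, Fin.succ_zero_eq_one]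
  refine mem_wSpace_succ_of_coeffs hab (hd.trans hb0.symm) ?_
  set s : Fin (m + 2 + 1) → Fin 2 :=
    Function.update (Pi.single (Fin.castSucc 1) 1) (Fin.last _) 1 with hs
  have hinit : Fin.init s = Pi.single 1 1 := by
    rw [hs, Fin.init_update_last, Fin.init_single_castSucc]
  have htail : Fin.tail s = Function.update (Pi.single 0 1) (Fin.last (m + 1)) 1 := by
    rw [hs, ← Fin.succ_last (m + 1), Fin.tail_update_succ, Fin.castSucc_one,
      ← Fin.succ_zero_eq_one, Fin.tail_single_succ]
  have htail_ne : Function.update (Pi.single 0 1 : Fin (m + 2) → Fin 2) (Fin.last _) 1 ≠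
      fun _ => 0 :=
    fun h => by simpa using congrFun h (Fin.last _)
  have key := (hab s).symm.trans (hcd s)
  rw [hinit, htail, Wstate_single, basisState_of_ne (single_ne_zero 1), basisState_of_ne htail_ne,
    Wstate_update_single Fin.last_pos.ne] at key
  simpa [hs] using key

/-- for the W state, (S_k ⊗ ℂ²) ∩ (ℂ² ⊗ S_k) = S_{k+1} for k ≥ 2. -/
theorem wState_intersection (k : ℕ) (hk : 2 ≤ k) :
    tensSnoc (wSpace k) ⊤ ⊓ tensCons ⊤ (wSpace k) = wSpace (k + 1) :=
  le_antisymm (tensSnoc_inf_tensCons_le_wSpace hk)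
    (le_inf (wSpace_succ_le_tensSnoc k) (wSpace_succ_le_tensCons k))
end
end

section
/- The Dicke MPS tensor with A_0 = 1_D and A_1 = Σ_{i=0}^{D−2} |i⟩⟨i+1| is left (D−1)-stable, with witness Y_0 = 1_D and Y_1 = A_1^{D−1}. -/
/-!
With `A 0 = 1` and `A 1 = N`, a word of length `j` in the `A i` is `N ^ m`, where `m ≤ j` counts
its letters `1`, and every such power occurs; so `V_j` is spanned by the `N ^ m` with `m ≤ j`.
For the shift, `N ^ D = 0`: hence `Y 0 = 1` maps each `N ^ m` with `m ≤ D` into `V_{D-1}`,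
`Y 1 = N ^ (D-1)` kills `N ^ m` for `m ≥ 1` and sends `1` to `N ^ (D-1) ∈ V_{D-1}`, and
`A 0 * Y 0 + A 1 * Y 1 = 1 + N ^ D = 1`.
-/

open scoped BigOperators

noncomputable section

/-- The nilpotent shift matrix ∑_{i=0}^{D-2} |i⟩⟨i+1|. -/
def shiftMat (D : ℕ) : Matrix (Fin D) (Fin D) ℂ :=
  Matrix.of fun i j => if (i : ℕ) + 1 = (j : ℕ) then 1 else 0

section

variable {D : ℕ} {A : Fin 2 → Matrix (Fin D) (Fin D) ℂ} {N : Matrix (Fin D) (Fin D) ℂ}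

lemma prodA_eq_pow (hA0 : A 0 = 1) (hA1 : A 1 = N) {k : ℕ} (s : Fin k → Fin 2) :
    prodA A s = N ^ ∑ t, (s t : ℕ) := by
  induction k with
  | zero => simp [prodA]
  | succ k ih =>
    have hhead : A (s 0) = N ^ (s 0 : ℕ) := by
      rcases Fin.exists_fin_two.mp ⟨s 0, rfl⟩ with h | h <;> simp [h, hA0, hA1]
    rw [prodA, List.ofFn_succ, List.prod_cons, Fin.sum_univ_succ, pow_add, hhead]
    exact congrArg _ (ih _)

lemma pow_mem_virtSpace (hA0 : A 0 = 1) (hA1 : A 1 = N) {j m : ℕ} (hm : m ≤ j) :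
    N ^ m ∈ virtSpace A j := by
  refine Submodule.subset_span ⟨fun t => if (t : ℕ) < m then 1 else 0, ?_⟩
  simp only [prodA_eq_pow hA0 hA1, apply_ite Fin.val, Fin.val_one, Fin.val_zero,
    Finset.sum_boole, Fin.card_filter_val_lt, Nat.cast_id, min_eq_right hm]

lemma virtSpace_le_comap_mulLeft (hA0 : A 0 = 1) (hA1 : A 1 = N) {Y : Matrix (Fin D) (Fin D) ℂ}
    {j k : ℕ} (hY : ∀ m ≤ k, Y * N ^ m ∈ virtSpace A j) :
    virtSpace A k ≤ (virtSpace A j).comap (LinearMap.mulLeft ℂ Y) := by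
  refine Submodule.span_le.mpr ?_
  rintro _ ⟨s, rfl⟩
  show Y * prodA A s ∈ virtSpace A j
  rw [prodA_eq_pow hA0 hA1]
  refine hY _ ((Finset.sum_le_card_nsmul _ _ 1 fun t _ => (s t).is_le).trans ?_)
  simp

end

lemma shiftMat_pow_apply (D k : ℕ) (i j : Fin D) :
    (shiftMat D ^ k) i j = if (i : ℕ) + k = j then 1 else 0 := by
  induction k generalizing j with
  | zero => simp [Matrix.one_apply, Fin.ext_iff]
  | succ k ih =>
    rw [pow_succ, Matrix.mul_apply]
    simp_rw [ih, shiftMat, Matrix.of_apply, ite_mul, one_mul, zero_mul, ← add_assoc]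
    rcases lt_or_ge ((i : ℕ) + k) D with h | h
    · rw [Finset.sum_eq_single_of_mem ⟨i + k, h⟩ (Finset.mem_univ _)
        fun l _ hl => if_neg fun e => hl (Fin.ext e.symm), if_pos rfl]
    · rw [Finset.sum_eq_zero fun l _ => if_neg (by have := l.isLt; omega),
        if_neg (by have := j.isLt; omega)]

lemma shiftMat_pow_eq_zero {D k : ℕ} (hk : D ≤ k) : shiftMat D ^ k = 0 := by
  ext i j
  rw [shiftMat_pow_apply, if_neg (by omega), Matrix.zero_apply]

/-- the Dicke MPS tensor (A₀ = 1, A₁ = shift) is left (D−1)-stable with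
witness Y₀ = 1, Y₁ = A₁^{D−1}. -/
theorem dicke_left_stable (D : ℕ) (hD : 0 < D) (A : Fin 2 → Matrix (Fin D) (Fin D) ℂ)
    (hA0 : A 0 = 1) (hA1 : A 1 = shiftMat D)
    (Y : Fin 2 → Matrix (Fin D) (Fin D) ℂ)
    (hY0 : Y 0 = 1) (hY1 : Y 1 = (shiftMat D) ^ (D - 1)) :
    (∀ i, ∀ M ∈ virtSpace A (D - 1 + 1), Y i * M ∈ virtSpace A (D - 1)) ∧
    ∀ M ∈ virtSpace A (D - 1 + 1), (∑ i, A i * Y i) * M = M := by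
  have hD1 : D - 1 + 1 = D := Nat.sub_add_cancel hD
  have hN : shiftMat D ^ D = 0 := shiftMat_pow_eq_zero le_rfl
  have hmul {Z : Matrix (Fin D) (Fin D) ℂ}
      (hZ : ∀ m ≤ D, Z * shiftMat D ^ m ∈ virtSpace A (D - 1)) :
      ∀ M ∈ virtSpace A (D - 1 + 1), Z * M ∈ virtSpace A (D - 1) :=
    fun M hM => virtSpace_le_comap_mulLeft hA0 hA1 (by rwa [hD1]) hM
  refine ⟨Fin.forall_fin_two.mpr ⟨hmul fun m hm => ?_, hmul fun m hm => ?_⟩, fun M _ => ?_⟩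
  · rw [hY0, one_mul]
    rcases hm.lt_or_eq with hlt | rfl
    · exact pow_mem_virtSpace hA0 hA1 (by omega)
    · exact hN ▸ zero_mem _
  · rw [hY1, ← pow_add]
    rcases Nat.eq_zero_or_pos m with rfl | hpos
    · exact pow_mem_virtSpace hA0 hA1 le_rfl
    · rw [shiftMat_pow_eq_zero (by omega)]
      exact zero_mem _
  · rw [Fin.sum_univ_two, hA0, hA1, hY0, hY1, one_mul, ← pow_succ', hD1, hN, add_zero, one_mul]
end
end

section
/- The momentum-W tensor A_0 = e^{−ip}|0⟩⟨0| + |1⟩⟨1|, A_1 = |0⟩⟨1| is left 1-stable with Y_0 = e^{ip}|0⟩⟨0| + |1⟩⟨1| and Y_1 = 0. -/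
open scoped BigOperators

noncomputable section

/-
The argument rests on `Y₀ A₀ = A₀ Y₀ = 1` (the diagonal phases `e^{±ip}` cancel), together with
`Y₀ A₁ = e^{ip} A₁`, `A₁ A₀ = A₁` and `A₁² = 0`. Hence `Y₀` maps each generator `A_a A_b` of `V₂(A)`
to `A_b`, to a multiple of `A₁`, or to `0`, all in `V₁(A)`, while
`Z = A₀ Y₀ + A₁ · 0 = 1`.
-/

lemma prodA_fin_two {d D : ℕ} (A : Fin d → Matrix (Fin D) (Fin D) ℂ) (s : Fin 2 → Fin d) :
    prodA A s = A (s 0) * A (s 1) := by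
  simp [prodA, List.ofFn_succ]

lemma mem_virtSpace_one {d D : ℕ} (A : Fin d → Matrix (Fin D) (Fin D) ℂ) (i : Fin d) :
    A i ∈ virtSpace A 1 :=
  Submodule.subset_span ⟨fun _ => i, by simp [prodA]⟩

lemma mul_mem_of_mem_virtSpace {d D j : ℕ} {A : Fin d → Matrix (Fin D) (Fin D) ℂ}
    {W : Submodule ℂ (Matrix (Fin D) (Fin D) ℂ)} {Y : Matrix (Fin D) (Fin D) ℂ}
    (h : ∀ s : Fin j → Fin d, Y * prodA A s ∈ W) {M : Matrix (Fin D) (Fin D) ℂ}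
    (hM : M ∈ virtSpace A j) : Y * M ∈ W := by
  have hle : virtSpace A j ≤ W.comap (LinearMap.mulLeft ℂ Y) :=
    Submodule.span_le.mpr fun _ ⟨s, hs⟩ => hs ▸ h s
  exact hle hM

lemma mul_mem_of_mem_virtSpace_two {d D : ℕ} {A : Fin d → Matrix (Fin D) (Fin D) ℂ}
    {W : Submodule ℂ (Matrix (Fin D) (Fin D) ℂ)} {Y : Matrix (Fin D) (Fin D) ℂ}
    (h : ∀ a b, Y * (A a * A b) ∈ W) {M : Matrix (Fin D) (Fin D) ℂ}
    (hM : M ∈ virtSpace A 2) : Y * M ∈ W :=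
  mul_mem_of_mem_virtSpace (fun s => prodA_fin_two A s ▸ h (s 0) (s 1)) hM

section TwoByTwo

variable (a b : ℂ)

lemma diag_mul_diag_eq_one (hab : a * b = 1) : !![a, 0; 0, 1] * !![b, 0; 0, 1] = 1 := by
  rw [Matrix.mul_fin_two, Matrix.one_fin_two]
  simp [hab]

lemma diag_mul_raise : !![a, 0; 0, 1] * !![0, 1; 0, 0] = a • !![0, 1; 0, 0] := by
  rw [Matrix.mul_fin_two, Matrix.smul_of]
  simp

lemma raise_mul_diag :
    !![0, 1; 0, 0] * !![b, 0; 0, 1] = (!![0, 1; 0, 0] : Matrix (Fin 2) (Fin 2) ℂ) := by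
  rw [Matrix.mul_fin_two]
  simp

lemma raise_mul_raise : !![0, 1; 0, 0] * !![0, 1; 0, 0] = (0 : Matrix (Fin 2) (Fin 2) ℂ) := by
  rw [Matrix.mul_fin_two, Matrix.eta_fin_two 0]
  simp

end TwoByTwo

/-- the momentum-W tensor is left 1-stable with
Y₀ = e^{ip}|0⟩⟨0| + |1⟩⟨1| and Y₁ = 0. -/
theorem momentumW_left_one_stable (p : ℝ) (A : Fin 2 → Matrix (Fin 2) (Fin 2) ℂ)
    (hA0 : A 0 = !![Complex.exp (-(Complex.I * p)), 0; 0, 1])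
    (hA1 : A 1 = !![0, 1; 0, 0])
    (Y : Fin 2 → Matrix (Fin 2) (Fin 2) ℂ)
    (hY0 : Y 0 = !![Complex.exp (Complex.I * p), 0; 0, 1])
    (hY1 : Y 1 = 0) :
    (∀ i, ∀ M ∈ virtSpace A 2, Y i * M ∈ virtSpace A 1) ∧
    ∀ M ∈ virtSpace A 2, (∑ i, A i * Y i) * M = M := by
  have hexp : Complex.exp (Complex.I * p) * Complex.exp (-(Complex.I * p)) = 1 := by
    rw [Complex.exp_neg]
    exact mul_inv_cancel₀ (Complex.exp_ne_zero _)
  have hY0A0 : Y 0 * A 0 = 1 := by rw [hY0, hA0, diag_mul_diag_eq_one _ _ hexp]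
  have hA0Y0 : A 0 * Y 0 = 1 := by
    rw [hY0, hA0, diag_mul_diag_eq_one _ _ ((mul_comm _ _).trans hexp)]
  have hY0A1 : Y 0 * A 1 = Complex.exp (Complex.I * p) • A 1 := by rw [hY0, hA1, diag_mul_raise]
  have hA1A0 : A 1 * A 0 = A 1 := by rw [hA1, hA0, raise_mul_diag]
  have hA1A1 : A 1 * A 1 = 0 := by rw [hA1, raise_mul_raise]
  have hY0_mul_gen : ∀ a b, Y 0 * (A a * A b) ∈ virtSpace A 1 := by
    refine Fin.forall_fin_two.mpr ⟨fun b => ?_, Fin.forall_fin_two.mpr ⟨?_, ?_⟩⟩ <;>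
      rw [← mul_assoc]
    · rw [hY0A0, one_mul]
      exact mem_virtSpace_one A b
    · rw [hY0A1, smul_mul_assoc, hA1A0]
      exact Submodule.smul_mem _ _ (mem_virtSpace_one A 1)
    · rw [hY0A1, smul_mul_assoc, hA1A1, smul_zero]
      exact zero_mem _
  refine ⟨Fin.forall_fin_two.mpr ⟨fun M hM => ?_, fun M _ => ?_⟩, fun M _ => ?_⟩
  · exact mul_mem_of_mem_virtSpace_two hY0_mul_gen hM
  · rw [hY1, zero_mul]
    exact zero_mem _
  · rw [Fin.sum_univ_two, hA0Y0, hY1, mul_zero, add_zero, one_mul]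
end
end
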